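/- arXiv:1611.09505 — 7 statements merged into one kernel-verified Lean document; each statement's English description precedes it below -/
import Mathlib

section
/- The function u(x,t) = 4(1 - x^2 + t^2)/(1 + x^2 + t^2)^2 satisfies the Boussinesq equation u_tt + u_xx - (u^2)_xx - (1/3) u_xxxx = 0 for all real x and t. -/
open Real

noncomputable def px (f : ℝ → ℝ → ℝ) : ℝ → ℝ → ℝ := fun x t => deriv (fun y => f y t) x
noncomputable def pt (f : ℝ → ℝ → ℝ) : ℝ → ℝ → ℝ := fun x t => deriv (fun s => f x s) t

noncomputable def u₁ : ℝ → ℝ → ℝ := fun x t => 4 * (1 - x^2 + t^2) / (1 + x^2 + t^2)^2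

private lemma myCongr {f : ℝ → ℝ} {a b x : ℝ} (h : HasDerivAt f a x) (e : a = b) :
    HasDerivAt f b x := e ▸ h

private lemma hpoly (a b c d e f g x p : ℝ) (F : ℝ → ℝ)
    (hF : ∀ y, F y = a + b*y + c*y^2 + d*y^3 + e*y^4 + f*y^5 + g*y^6)
    (hp' : p = b + 2*c*x + 3*d*x^2 + 4*e*x^3 + 5*f*x^4 + 6*g*x^5) :
    HasDerivAt F p x := by
  have h1 := (hasDerivAt_id x).const_mul b
  have h2 := (hasDerivAt_pow 2 x).const_mul c
  have h3 := (hasDerivAt_pow 3 x).const_mul d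
  have h4 := (hasDerivAt_pow 4 x).const_mul e
  have h5 := (hasDerivAt_pow 5 x).const_mul f
  have h6 := (hasDerivAt_pow 6 x).const_mul g
  have hD := ((((((hasDerivAt_const x a).add h1).add h2).add h3).add h4).add h5).add h6
  rw [funext hF, hp']
  exact myCongr hD (by push_cast; ring)

private lemma ratstep (t x : ℝ) (k : ℕ) (P : ℝ → ℝ) (p v : ℝ) (hP : HasDerivAt P p x)
    (hv : v = (p*(1+x^2+t^2) - ((k:ℝ)+1)*(2*x)*(P x)) / (1+x^2+t^2)^(k+2)) :
    HasDerivAt (fun y => P y / (1+y^2+t^2)^(k+1)) v x := by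
  have hd : (0:ℝ) < 1+x^2+t^2 := by positivity
  have hbase : HasDerivAt (fun y : ℝ => 1+y^2+t^2) (2*x) x := by
    have h := ((hasDerivAt_pow 2 x).const_add 1).add_const (t^2)
    exact myCongr h (by norm_num)
  have hD : HasDerivAt (fun y : ℝ => (1+y^2+t^2)^(k+1))
      (((k:ℝ)+1) * (1+x^2+t^2)^k * (2*x)) x := by
    have h := hbase.pow (k+1)
    exact myCongr h (by rw [Nat.add_sub_cancel]; push_cast; ring)
  have h := hP.div hD (pow_ne_zero _ (ne_of_gt hd))
  refine myCongr h ?_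
  rw [hv, div_eq_div_iff (by positivity) (by positivity)]
  ring

private lemma ratstepT (x t : ℝ) (k : ℕ) (P : ℝ → ℝ) (p v : ℝ) (hP : HasDerivAt P p t)
    (hv : v = (p*(1+x^2+t^2) - ((k:ℝ)+1)*(2*t)*(P t)) / (1+x^2+t^2)^(k+2)) :
    HasDerivAt (fun s => P s / (1+x^2+s^2)^(k+1)) v t := by
  have hd : (0:ℝ) < 1+x^2+t^2 := by positivity
  have hbase : HasDerivAt (fun s : ℝ => 1+x^2+s^2) (2*t) t := by
    have h := (hasDerivAt_pow 2 t).const_add (1+x^2)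
    exact myCongr h (by norm_num)
  have hD : HasDerivAt (fun s : ℝ => (1+x^2+s^2)^(k+1))
      (((k:ℝ)+1) * (1+x^2+t^2)^k * (2*t)) t := by
    have h := hbase.pow (k+1)
    exact myCongr h (by rw [Nat.add_sub_cancel]; push_cast; ring)
  have h := hP.div hD (pow_ne_zero _ (ne_of_gt hd))
  refine myCongr h ?_
  rw [hv, div_eq_div_iff (by positivity) (by positivity)]
  ring

private lemma step1 (x t : ℝ) : HasDerivAt (fun y => u₁ y t)
    ((-24*x - 24*x*t^2 + 8*x^3)/(1+x^2+t^2)^3) x := by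
  refine ratstep t x 1 (fun y => 4*(1-y^2+t^2)) (-(8*x)) _
    (hpoly (4+4*t^2) 0 (-4) 0 0 0 0 x _ _ (fun y => by ring) (by ring)) ?_
  push_cast; ring

private lemma step2 (x t : ℝ) :
    HasDerivAt (fun y => (-24*y - 24*y*t^2 + 8*y^3)/(1+y^2+t^2)^3)
      ((-24 - 48*t^2 - 24*t^4 + 144*x^2 + 144*x^2*t^2 - 24*x^4)/(1+x^2+t^2)^4) x := by
  refine ratstep t x 2 (fun y => -24*y - 24*y*t^2 + 8*y^3) (-24 - 24*t^2 + 24*x^2) _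
    (hpoly 0 (-24-24*t^2) 0 8 0 0 0 x _ _ (fun y => by ring) (by ring)) ?_
  push_cast; ring

private lemma step3 (x t : ℝ) :
    HasDerivAt (fun y => (-24 - 48*t^2 - 24*t^4 + 144*y^2 + 144*y^2*t^2 - 24*y^4)/(1+y^2+t^2)^4)
      ((480*x + 960*x*t^2 + 480*x*t^4 - 960*x^3 - 960*x^3*t^2 + 96*x^5)/(1+x^2+t^2)^5) x := by
  refine ratstep t x 3 _ (288*x + 288*x*t^2 - 96*x^3) _
    (hpoly (-24-48*t^2-24*t^4) 0 (144+144*t^2) 0 (-24) 0 0 x _ _ (fun y => by ring) (by ring)) ?_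
  push_cast; ring

private lemma step4 (x t : ℝ) :
    HasDerivAt (fun y => (480*y + 960*y*t^2 + 480*y*t^4 - 960*y^3 - 960*y^3*t^2 + 96*y^5)/(1+y^2+t^2)^5)
      ((480 + 1440*t^2 + 1440*t^4 + 480*t^6 - 7200*x^2 - 14400*x^2*t^2 - 7200*x^2*t^4
        + 7200*x^4 + 7200*x^4*t^2 - 480*x^6)/(1+x^2+t^2)^6) x := by
  refine ratstep t x 4 _ (480 + 960*t^2 + 480*t^4 - 2880*x^2 - 2880*x^2*t^2 + 480*x^4) _
    (hpoly 0 (480+960*t^2+480*t^4) 0 (-960-960*t^2) 0 96 0 x _ _ (fun y => by ring) (by ring)) ?_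
  push_cast; ring

private lemma stepT1 (x t : ℝ) : HasDerivAt (fun s => u₁ x s)
    ((-8*t - 8*t^3 + 24*x^2*t)/(1+x^2+t^2)^3) t := by
  refine ratstepT x t 1 (fun s => 4*(1-x^2+s^2)) (8*t) _
    (hpoly (4-4*x^2) 0 4 0 0 0 0 t _ _ (fun s => by ring) (by ring)) ?_
  push_cast; ring

private lemma stepT2 (x t : ℝ) :
    HasDerivAt (fun s => (-8*s - 8*s^3 + 24*x^2*s)/(1+x^2+s^2)^3)
      ((-8 + 16*t^2 + 24*t^4 + 16*x^2 - 144*x^2*t^2 + 24*x^4)/(1+x^2+t^2)^4) t := by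
  refine ratstepT x t 2 (fun s => -8*s - 8*s^3 + 24*x^2*s) (-8 - 24*t^2 + 24*x^2) _
    (hpoly 0 (-8+24*x^2) 0 (-8) 0 0 0 t _ _ (fun s => by ring) (by ring)) ?_
  push_cast; ring

private lemma stepsq1 (x t : ℝ) : HasDerivAt (fun y => (u₁ y t)^2)
    ((-192*x - 384*x*t^2 - 192*x*t^4 + 256*x^3 + 256*x^3*t^2 - 64*x^5)/(1+x^2+t^2)^5) x := by
  have h := (step1 x t).pow 2
  refine myCongr h ?_
  have hd : (1+x^2+t^2) ≠ 0 := by positivity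
  simp only [u₁]
  push_cast
  field_simp
  ring

private lemma stepsq2 (x t : ℝ) :
    HasDerivAt (fun y => (-192*y - 384*y*t^2 - 192*y*t^4 + 256*y^3 + 256*y^3*t^2 - 64*y^5)/(1+y^2+t^2)^5)
      ((-192 - 576*t^2 - 576*t^4 - 192*t^6 + 2496*x^2 + 4992*x^2*t^2 + 2496*x^2*t^4
        - 2112*x^4 - 2112*x^4*t^2 + 320*x^6)/(1+x^2+t^2)^6) x := by
  refine ratstep t x 4 _ (-192 - 384*t^2 - 192*t^4 + 768*x^2 + 768*x^2*t^2 - 320*x^4) _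
    (hpoly 0 (-192-384*t^2-192*t^4) 0 (256+256*t^2) 0 (-64) 0 x _ _ (fun y => by ring) (by ring)) ?_
  push_cast; ring

private lemma pxu1 : px u₁ = fun x t => (-24*x - 24*x*t^2 + 8*x^3)/(1+x^2+t^2)^3 := by
  funext x t; exact (step1 x t).deriv

private lemma pxxu1 : px (px u₁)
    = fun x t => (-24 - 48*t^2 - 24*t^4 + 144*x^2 + 144*x^2*t^2 - 24*x^4)/(1+x^2+t^2)^4 := by
  rw [pxu1]; funext x t; exact (step2 x t).deriv

private lemma pxxxu1 : px (px (px u₁))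
    = fun x t => (480*x + 960*x*t^2 + 480*x*t^4 - 960*x^3 - 960*x^3*t^2 + 96*x^5)/(1+x^2+t^2)^5 := by
  rw [pxxu1]; funext x t; exact (step3 x t).deriv

private lemma pxxxxu1 : px (px (px (px u₁)))
    = fun x t => (480 + 1440*t^2 + 1440*t^4 + 480*t^6 - 7200*x^2 - 14400*x^2*t^2 - 7200*x^2*t^4
        + 7200*x^4 + 7200*x^4*t^2 - 480*x^6)/(1+x^2+t^2)^6 := by
  rw [pxxxu1]; funext x t; exact (step4 x t).deriv

private lemma ptu1 : pt u₁ = fun x t => (-8*t - 8*t^3 + 24*x^2*t)/(1+x^2+t^2)^3 := by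
  funext x t; exact (stepT1 x t).deriv

private lemma pttu1 : pt (pt u₁)
    = fun x t => (-8 + 16*t^2 + 24*t^4 + 16*x^2 - 144*x^2*t^2 + 24*x^4)/(1+x^2+t^2)^4 := by
  rw [ptu1]; funext x t; exact (stepT2 x t).deriv

private lemma pxsq : px (fun y s => (u₁ y s)^2)
    = fun x t => (-192*x - 384*x*t^2 - 192*x*t^4 + 256*x^3 + 256*x^3*t^2 - 64*x^5)/(1+x^2+t^2)^5 := by
  funext x t; exact (stepsq1 x t).deriv

private lemma pxxsq : px (px (fun y s => (u₁ y s)^2))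
    = fun x t => (-192 - 576*t^2 - 576*t^4 - 192*t^6 + 2496*x^2 + 4992*x^2*t^2 + 2496*x^2*t^4
        - 2112*x^4 - 2112*x^4*t^2 + 320*x^6)/(1+x^2+t^2)^6 := by
  rw [pxsq]; funext x t; exact (stepsq2 x t).deriv

theorem stmt0 : ∀ x t : ℝ,
    pt (pt u₁) x t + px (px u₁) x t - px (px (fun y s => (u₁ y s)^2)) x t
      - (1/3) * px (px (px (px u₁))) x t = 0 := by
  intro x t
  rw [pxxxxu1, pttu1, pxxu1, pxxsq]
  have hd : (1+x^2+t^2) ≠ 0 := by positivity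
  field_simp
  ring
end

section
/- If F : ℝ × ℝ → ℝ is smooth and strictly positive and satisfies the bilinear equation F·F_tt - F_t^2 + F·F_xx - F_x^2 - (1/3)(F·F_xxxx - 4 F_x F_xxx + 3 F_xx^2) = 0, then u = 2 (∂²/∂x²) log F satisfies the Boussinesq equation u_tt + u_xx - (u^2)_xx - (1/3) u_xxxx = 0. -/
open Real


open Real

noncomputable def Dv (v : ℝ×ℝ) (g : ℝ×ℝ → ℝ) : ℝ×ℝ → ℝ := fun p => fderiv ℝ g p v

lemma Dv_of_hasFDerivAt {g : ℝ×ℝ→ℝ} {L : ℝ×ℝ →L[ℝ] ℝ} {p v} (h : HasFDerivAt g L p) :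
    Dv v g p = L v := by rw [Dv, h.fderiv]

lemma contDiff_Dv (v) {g : ℝ×ℝ→ℝ} (hg : ContDiff ℝ (⊤:ℕ∞) g) : ContDiff ℝ (⊤:ℕ∞) (Dv v g) :=
  (hg.fderiv_right (le_refl _)).clm_apply contDiff_const

lemma cdiff {f : ℝ×ℝ→ℝ} (h : ContDiff ℝ (⊤:ℕ∞) f) (q : ℝ×ℝ) : DifferentiableAt ℝ f q :=
  (h.differentiable (by simp)) q

lemma Dv_const (v : ℝ×ℝ) (c : ℝ) (p : ℝ×ℝ) : Dv v (fun _ => c) p = 0 := by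
  simp [Dv]

lemma Dv_add (v) {a b : ℝ×ℝ→ℝ} {p} (ha : DifferentiableAt ℝ a p) (hb : DifferentiableAt ℝ b p) :
    Dv v (fun q => a q + b q) p = Dv v a p + Dv v b p := by
  rw [Dv_of_hasFDerivAt (g := fun q => a q + b q) (ha.hasFDerivAt.add hb.hasFDerivAt)]; simp [Dv]

lemma Dv_sub (v) {a b : ℝ×ℝ→ℝ} {p} (ha : DifferentiableAt ℝ a p) (hb : DifferentiableAt ℝ b p) :
    Dv v (fun q => a q - b q) p = Dv v a p - Dv v b p := by
  rw [Dv_of_hasFDerivAt (g := fun q => a q - b q) (ha.hasFDerivAt.sub hb.hasFDerivAt)]; simp [Dv]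

lemma Dv_const_mul (v) (c : ℝ) {a : ℝ×ℝ→ℝ} {p} (ha : DifferentiableAt ℝ a p) :
    Dv v (fun q => c * a q) p = c * Dv v a p := by
  rw [Dv_of_hasFDerivAt (ha.hasFDerivAt.const_mul c)]; simp [Dv]

lemma Dv_mul (v) {a b : ℝ×ℝ→ℝ} {p} (ha : DifferentiableAt ℝ a p) (hb : DifferentiableAt ℝ b p) :
    Dv v (fun q => a q * b q) p = a p * Dv v b p + b p * Dv v a p := by
  rw [Dv_of_hasFDerivAt (g := fun q => a q * b q) (ha.hasFDerivAt.mul hb.hasFDerivAt)]; simp [Dv]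

lemma Dv_inv (v) {a : ℝ×ℝ→ℝ} {p} (ha : DifferentiableAt ℝ a p) (h0 : a p ≠ 0) :
    Dv v (fun q => (a q)⁻¹) p = -(a p ^ 2)⁻¹ * Dv v a p := by
  have h := Dv_of_hasFDerivAt (g := fun q => (a q)⁻¹) (v := v)
    ((hasDerivAt_inv h0).comp_hasFDerivAt p ha.hasFDerivAt)
  rw [h]; simp [Dv]

lemma Dv_pow (v) (n : ℕ) {a : ℝ×ℝ→ℝ} {p} (ha : DifferentiableAt ℝ a p) :
    Dv v (fun q => (a q)^n) p = n * (a p)^(n-1) * Dv v a p := by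
  have h := Dv_of_hasFDerivAt (g := fun q => (a q)^n) (v := v)
    ((hasDerivAt_pow n (a p)).comp_hasFDerivAt p ha.hasFDerivAt)
  rw [h]; simp [Dv]

lemma Dv_log (v) {a : ℝ×ℝ→ℝ} {p} (ha : DifferentiableAt ℝ a p) (h0 : a p ≠ 0) :
    Dv v (fun q => Real.log (a q)) p = (a p)⁻¹ * Dv v a p := by
  have h := Dv_of_hasFDerivAt (g := fun q => Real.log (a q)) (v := v)
    ((Real.hasDerivAt_log h0).comp_hasFDerivAt p ha.hasFDerivAt)
  rw [h]; simp [Dv]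

lemma Dv_comm {g : ℝ×ℝ→ℝ} (hg : ContDiff ℝ (⊤:ℕ∞) g) (v w p) :
    Dv v (Dv w g) p = Dv w (Dv v g) p := by
  have h2 : ContDiff ℝ (⊤:ℕ∞) (fderiv ℝ g) := hg.fderiv_right (le_refl _)
  have hd : HasFDerivAt (fderiv ℝ g) (fderiv ℝ (fderiv ℝ g) p) p :=
    ((h2.differentiable (by simp)) p).hasFDerivAt
  have h1 : ∀ u : ℝ×ℝ, HasFDerivAt (Dv u g)
      ((ContinuousLinearMap.apply ℝ ℝ u).comp (fderiv ℝ (fderiv ℝ g) p)) p := fun u =>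
    (ContinuousLinearMap.apply ℝ ℝ u).hasFDerivAt.comp p hd
  rw [Dv_of_hasFDerivAt (h1 w), Dv_of_hasFDerivAt (h1 v)]
  exact (hg.contDiffAt.isSymmSndFDerivAt (by rw [minSmoothness_of_isRCLikeNormedField]; exact WithTop.coe_le_coe.2 (le_top : (2:ℕ∞) ≤ ⊤))).eq v w

lemma Dv_comm_fun {g : ℝ×ℝ→ℝ} (hg : ContDiff ℝ (⊤:ℕ∞) g) (v w) :
    Dv v (Dv w g) = Dv w (Dv v g) := funext (Dv_comm hg v w)

lemma px_bridge {g : ℝ×ℝ→ℝ} (hg : Differentiable ℝ g) :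
    px (fun x t => g (x,t)) = fun x t => Dv (1,0) g (x,t) := by
  funext x t
  have h1 : HasDerivAt (fun y : ℝ => (y,t)) ((1:ℝ),(0:ℝ)) x :=
    (hasDerivAt_id x).prodMk (hasDerivAt_const x t)
  exact ((hg (x,t)).hasFDerivAt.comp_hasDerivAt x h1).deriv

lemma pt_bridge {g : ℝ×ℝ→ℝ} (hg : Differentiable ℝ g) :
    pt (fun x t => g (x,t)) = fun x t => Dv (0,1) g (x,t) := by
  funext x t
  have h1 : HasDerivAt (fun s : ℝ => (x,s)) ((0:ℝ),(1:ℝ)) t :=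
    (hasDerivAt_const t x).prodMk (hasDerivAt_id t)
  exact ((hg (x,t)).hasFDerivAt.comp_hasDerivAt t h1).deriv

lemma keyE (g : ℝ×ℝ→ℝ) (hg : ContDiff ℝ (⊤:ℕ∞) g) (h0 : ∀ p, g p ≠ 0)
    (hb : ∀ p, g p * Dv (0,1) (Dv (0,1) g) p - (Dv (0,1) g p)^2
        + g p * Dv (1,0) (Dv (1,0) g) p - (Dv (1,0) g p)^2
        - (1/3) * (g p * Dv (1,0) (Dv (1,0) (Dv (1,0) (Dv (1,0) g))) p
            - 4 * Dv (1,0) g p * Dv (1,0) (Dv (1,0) (Dv (1,0) g)) p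
            + 3 * (Dv (1,0) (Dv (1,0) g) p)^2) = 0) :
    ∀ p, Dv (0,1) (Dv (0,1) (fun q => Real.log (g q))) p
       + Dv (1,0) (Dv (1,0) (fun q => Real.log (g q))) p
       - 2 * (Dv (1,0) (Dv (1,0) (fun q => Real.log (g q))) p)^2
       - (1/3) * Dv (1,0) (Dv (1,0) (Dv (1,0) (Dv (1,0) (fun q => Real.log (g q))))) p = 0 := by
  have c1 := contDiff_Dv (1,0) hg
  have c2 := contDiff_Dv (1,0) c1
  have c3 := contDiff_Dv (1,0) c2
  have ct := contDiff_Dv (0,1) hg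
  have ci : ContDiff ℝ (⊤:ℕ∞) (fun q => (g q)⁻¹) := hg.inv h0
  have P1 : Dv (1,0) (fun q => Real.log (g q)) = fun q => (g q)⁻¹ * Dv (1,0) g q :=
    funext fun q => Dv_log _ (cdiff hg q) (h0 q)
  have P1t : Dv (0,1) (fun q => Real.log (g q)) = fun q => (g q)⁻¹ * Dv (0,1) g q :=
    funext fun q => Dv_log _ (cdiff hg q) (h0 q)
  have P2 : Dv (1,0) (Dv (1,0) (fun q => Real.log (g q)))
      = fun q => (g q)⁻¹ * Dv (1,0) (Dv (1,0) g) q - ((g q)⁻¹)^2 * (Dv (1,0) g q)^2 := by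
    rw [P1]; funext q
    rw [Dv_mul _ (cdiff ci q) (cdiff c1 q), Dv_inv _ (cdiff hg q) (h0 q)]
    ring
  have P2t : Dv (0,1) (Dv (0,1) (fun q => Real.log (g q)))
      = fun q => (g q)⁻¹ * Dv (0,1) (Dv (0,1) g) q - ((g q)⁻¹)^2 * (Dv (0,1) g q)^2 := by
    rw [P1t]; funext q
    rw [Dv_mul _ (cdiff ci q) (cdiff ct q), Dv_inv _ (cdiff hg q) (h0 q)]
    ring
  have P3 : Dv (1,0) (Dv (1,0) (Dv (1,0) (fun q => Real.log (g q))))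
      = fun q => (g q)⁻¹ * Dv (1,0) (Dv (1,0) (Dv (1,0) g)) q
          - 3 * ((g q)⁻¹)^2 * (Dv (1,0) g q * Dv (1,0) (Dv (1,0) g) q)
          + 2 * ((g q)⁻¹)^3 * (Dv (1,0) g q)^3 := by
    rw [P2]; funext q
    have d1 : DifferentiableAt ℝ (fun q => (g q)⁻¹ * Dv (1,0) (Dv (1,0) g) q) q :=
      cdiff (ci.mul c2) q
    have d2 : DifferentiableAt ℝ (fun q => ((g q)⁻¹)^2 * (Dv (1,0) g q)^2) q :=
      cdiff ((ci.pow 2).mul (c1.pow 2)) q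
    rw [Dv_sub _ d1 d2, Dv_mul _ (cdiff ci q) (cdiff c2 q), Dv_inv _ (cdiff hg q) (h0 q),
        Dv_mul _ (cdiff (ci.pow 2) q) (cdiff (c1.pow 2) q),
        Dv_pow _ 2 (cdiff ci q), Dv_inv _ (cdiff hg q) (h0 q), Dv_pow _ 2 (cdiff c1 q)]
    ring
  intro p
  have valD4 : Dv (1,0) (Dv (1,0) (Dv (1,0) (Dv (1,0) (fun q => Real.log (g q))))) p
      = (g p)⁻¹ * Dv (1,0) (Dv (1,0) (Dv (1,0) (Dv (1,0) g))) p
        - ((g p)⁻¹)^2 * (4 * Dv (1,0) g p * Dv (1,0) (Dv (1,0) (Dv (1,0) g)) p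
            + 3 * (Dv (1,0) (Dv (1,0) g) p)^2)
        + 12 * ((g p)⁻¹)^3 * (Dv (1,0) g p)^2 * Dv (1,0) (Dv (1,0) g) p
        - 6 * ((g p)⁻¹)^4 * (Dv (1,0) g p)^4 := by
    rw [P3]
    have dA : DifferentiableAt ℝ (fun q => (g q)⁻¹ * Dv (1,0) (Dv (1,0) (Dv (1,0) g)) q) p :=
      cdiff (ci.mul c3) p
    have dB : DifferentiableAt ℝ
        (fun q => 3 * ((g q)⁻¹)^2 * (Dv (1,0) g q * Dv (1,0) (Dv (1,0) g) q)) p :=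
      cdiff ((contDiff_const.mul (ci.pow 2)).mul (c1.mul c2)) p
    have dC : DifferentiableAt ℝ (fun q => 2 * ((g q)⁻¹)^3 * (Dv (1,0) g q)^3) p :=
      cdiff ((contDiff_const.mul (ci.pow 3)).mul (c1.pow 3)) p
    have dAB : DifferentiableAt ℝ (fun q => (g q)⁻¹ * Dv (1,0) (Dv (1,0) (Dv (1,0) g)) q
        - 3 * ((g q)⁻¹)^2 * (Dv (1,0) g q * Dv (1,0) (Dv (1,0) g) q)) p :=
      cdiff ((ci.mul c3).sub ((contDiff_const.mul (ci.pow 2)).mul (c1.mul c2))) p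
    rw [Dv_add _ dAB dC, Dv_sub _ dA dB,
        Dv_mul _ (cdiff ci p) (cdiff c3 p), Dv_inv _ (cdiff hg p) (h0 p),
        Dv_mul _ (cdiff (contDiff_const.mul (ci.pow 2)) p) (cdiff (c1.mul c2) p),
        Dv_const_mul _ 3 (cdiff (ci.pow 2) p), Dv_pow _ 2 (cdiff ci p),
        Dv_inv _ (cdiff hg p) (h0 p),
        Dv_mul _ (cdiff c1 p) (cdiff c2 p),
        Dv_mul _ (cdiff (contDiff_const.mul (ci.pow 3)) p) (cdiff (c1.pow 3) p),
        Dv_const_mul _ 2 (cdiff (ci.pow 3) p), Dv_pow _ 3 (cdiff ci p),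
        Dv_inv _ (cdiff hg p) (h0 p), Dv_pow _ 3 (cdiff c1 p)]
    ring
  rw [valD4]
  have h2 := congrFun P2 p
  have h2t := congrFun P2t p
  rw [h2t, h2]
  have hbp := hb p
  have hGI : g p * (g p)⁻¹ = 1 := mul_inv_cancel₀ (h0 p)
  linear_combination ((g p)⁻¹^2) * hbp
    - ((g p)⁻¹ * (Dv (0,1) (Dv (0,1) g) p + Dv (1,0) (Dv (1,0) g) p
        - (1/3) * Dv (1,0) (Dv (1,0) (Dv (1,0) (Dv (1,0) g))) p)) * hGI

lemma key2 (w : ℝ×ℝ→ℝ) (hw : ContDiff ℝ (⊤:ℕ∞) w)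
    (hE : ∀ p, Dv (0,1) (Dv (0,1) w) p + Dv (1,0) (Dv (1,0) w) p
        - 2 * (Dv (1,0) (Dv (1,0) w) p)^2
        - (1/3) * Dv (1,0) (Dv (1,0) (Dv (1,0) (Dv (1,0) w))) p = 0) :
    ∀ p, Dv (0,1) (Dv (0,1) (fun q => 2 * Dv (1,0) (Dv (1,0) w) q)) p
       + Dv (1,0) (Dv (1,0) (fun q => 2 * Dv (1,0) (Dv (1,0) w) q)) p
       - Dv (1,0) (Dv (1,0) (fun q => (2 * Dv (1,0) (Dv (1,0) w) q)^2)) p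
       - (1/3) * Dv (1,0) (Dv (1,0) (Dv (1,0) (Dv (1,0)
            (fun q => 2 * Dv (1,0) (Dv (1,0) w) q)))) p = 0 := by
  -- smoothness
  have cB : ContDiff ℝ (⊤:ℕ∞) (Dv (1,0) (Dv (1,0) w)) :=
    contDiff_Dv _ (contDiff_Dv _ hw)
  have cA : ContDiff ℝ (⊤:ℕ∞) (Dv (0,1) (Dv (0,1) w)) :=
    contDiff_Dv _ (contDiff_Dv _ hw)
  have cC : ContDiff ℝ (⊤:ℕ∞) (fun q => (Dv (1,0) (Dv (1,0) w) q)^2) := cB.pow 2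
  have cD : ContDiff ℝ (⊤:ℕ∞) (Dv (1,0) (Dv (1,0) (Dv (1,0) (Dv (1,0) w)))) :=
    contDiff_Dv _ (contDiff_Dv _ cB)
  -- pull out constants
  have pull : ∀ (v : ℝ×ℝ) (c : ℝ) (h : ℝ×ℝ→ℝ), ContDiff ℝ (⊤:ℕ∞) h →
      Dv v (fun q => c * h q) = fun q => c * Dv v h q := by
    intro v c h ch
    exact funext fun q => Dv_const_mul v c (cdiff ch q)
  -- the E-function is zero, so its second x-derivative is zero
  have hEf : (fun q => Dv (0,1) (Dv (0,1) w) q + Dv (1,0) (Dv (1,0) w) q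
      - 2 * (Dv (1,0) (Dv (1,0) w) q)^2
      - (1/3) * Dv (1,0) (Dv (1,0) (Dv (1,0) (Dv (1,0) w))) q) = (fun _ => (0:ℝ)) :=
    funext hE
  -- expand Dv X of the E-function
  have L1 : Dv (1,0) (fun q => Dv (0,1) (Dv (0,1) w) q + Dv (1,0) (Dv (1,0) w) q
      - 2 * (Dv (1,0) (Dv (1,0) w) q)^2
      - (1/3) * Dv (1,0) (Dv (1,0) (Dv (1,0) (Dv (1,0) w))) q)
      = fun q => Dv (1,0) (Dv (0,1) (Dv (0,1) w)) q + Dv (1,0) (Dv (1,0) (Dv (1,0) w)) q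
      - 2 * Dv (1,0) (fun r => (Dv (1,0) (Dv (1,0) w) r)^2) q
      - (1/3) * Dv (1,0) (Dv (1,0) (Dv (1,0) (Dv (1,0) (Dv (1,0) w)))) q := by
    funext q
    have d1 : DifferentiableAt ℝ (fun q => Dv (0,1) (Dv (0,1) w) q
        + Dv (1,0) (Dv (1,0) w) q) q := cdiff (cA.add cB) q
    have d2 : DifferentiableAt ℝ (fun q => 2 * (Dv (1,0) (Dv (1,0) w) q)^2) q :=
      cdiff (contDiff_const.mul cC) q
    have d12 : DifferentiableAt ℝ (fun q => Dv (0,1) (Dv (0,1) w) q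
        + Dv (1,0) (Dv (1,0) w) q - 2 * (Dv (1,0) (Dv (1,0) w) q)^2) q :=
      cdiff ((cA.add cB).sub (contDiff_const.mul cC)) q
    have d3 : DifferentiableAt ℝ (fun q => (1/3) * Dv (1,0) (Dv (1,0) (Dv (1,0)
        (Dv (1,0) w))) q) q := cdiff (contDiff_const.mul cD) q
    rw [Dv_sub _ d12 d3, Dv_sub _ d1 d2, Dv_add _ (cdiff cA q) (cdiff cB q),
        Dv_const_mul _ 2 (cdiff cC q), Dv_const_mul _ ((1:ℝ)/3) (cdiff cD q)]
  have L2 : ∀ q, Dv (1,0) (fun q => Dv (1,0) (Dv (0,1) (Dv (0,1) w)) q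
      + Dv (1,0) (Dv (1,0) (Dv (1,0) w)) q
      - 2 * Dv (1,0) (fun r => (Dv (1,0) (Dv (1,0) w) r)^2) q
      - (1/3) * Dv (1,0) (Dv (1,0) (Dv (1,0) (Dv (1,0) (Dv (1,0) w)))) q) q
      = Dv (1,0) (Dv (1,0) (Dv (0,1) (Dv (0,1) w))) q
      + Dv (1,0) (Dv (1,0) (Dv (1,0) (Dv (1,0) w))) q
      - 2 * Dv (1,0) (Dv (1,0) (fun r => (Dv (1,0) (Dv (1,0) w) r)^2)) q
      - (1/3) * Dv (1,0) (Dv (1,0) (Dv (1,0) (Dv (1,0) (Dv (1,0) (Dv (1,0) w)))))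
          q := by
    intro q
    have cA1 := contDiff_Dv ((1:ℝ),(0:ℝ)) cA
    have cB1 := contDiff_Dv ((1:ℝ),(0:ℝ)) cB
    have cC1 := contDiff_Dv ((1:ℝ),(0:ℝ)) cC
    have cD1 := contDiff_Dv ((1:ℝ),(0:ℝ)) cD
    have d1 : DifferentiableAt ℝ (fun q => Dv (1,0) (Dv (0,1) (Dv (0,1) w)) q
        + Dv (1,0) (Dv (1,0) (Dv (1,0) w)) q) q := cdiff (cA1.add cB1) q
    have d2 : DifferentiableAt ℝ (fun q => 2 * Dv (1,0)
        (fun r => (Dv (1,0) (Dv (1,0) w) r)^2) q) q := cdiff (contDiff_const.mul cC1) q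
    have d12 : DifferentiableAt ℝ (fun q => Dv (1,0) (Dv (0,1) (Dv (0,1) w)) q
        + Dv (1,0) (Dv (1,0) (Dv (1,0) w)) q
        - 2 * Dv (1,0) (fun r => (Dv (1,0) (Dv (1,0) w) r)^2) q) q :=
      cdiff ((cA1.add cB1).sub (contDiff_const.mul cC1)) q
    have d3 : DifferentiableAt ℝ (fun q => (1/3) * Dv (1,0) (Dv (1,0) (Dv (1,0)
        (Dv (1,0) (Dv (1,0) w)))) q) q := cdiff (contDiff_const.mul cD1) q
    rw [Dv_sub _ d12 d3, Dv_sub _ d1 d2, Dv_add _ (cdiff cA1 q) (cdiff cB1 q),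
        Dv_const_mul _ 2 (cdiff cC1 q), Dv_const_mul _ ((1:ℝ)/3) (cdiff cD1 q)]
  -- commutation : Dx Dx Dt Dt w = Dt Dt Dx Dx w
  have hcomm : Dv (1,0) (Dv (1,0) (Dv (0,1) (Dv (0,1) w)))
      = Dv (0,1) (Dv (0,1) (Dv (1,0) (Dv (1,0) w))) := by
    have s1 : Dv (1,0) (Dv (0,1) (Dv (0,1) w))
        = Dv (0,1) (Dv (0,1) (Dv (1,0) w)) := by
      rw [Dv_comm_fun (contDiff_Dv (0,1) hw) (1,0) (0,1),
          Dv_comm_fun hw (1,0) (0,1)]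
    rw [s1, Dv_comm_fun (contDiff_Dv (0,1) (contDiff_Dv (1,0) hw)) (1,0) (0,1),
        Dv_comm_fun (contDiff_Dv (1,0) hw) (1,0) (0,1)]
  intro p
  -- pointwise zero identity
  have hz : Dv (1,0) (Dv (1,0) (fun q => Dv (0,1) (Dv (0,1) w) q + Dv (1,0) (Dv (1,0) w) q
      - 2 * (Dv (1,0) (Dv (1,0) w) q)^2
      - (1/3) * Dv (1,0) (Dv (1,0) (Dv (1,0) (Dv (1,0) w))) q)) p = 0 := by
    rw [hEf]
    have z : Dv ((1:ℝ),(0:ℝ)) (fun _ : ℝ×ℝ => (0:ℝ)) = fun _ => (0:ℝ) :=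
      funext fun q => Dv_const _ 0 q
    rw [z, z]
  rw [L1] at hz
  rw [L2 p] at hz
  rw [hcomm] at hz
  -- now expand the goal
  rw [pull (0,1) 2 _ cB, pull (0,1) 2 _ (contDiff_Dv _ cB),
      pull (1,0) 2 _ cB, pull (1,0) 2 _ (contDiff_Dv _ cB)]
  have hsq : (fun q => (2 * Dv (1,0) (Dv (1,0) w) q)^2)
      = fun q => 4 * (fun r => (Dv (1,0) (Dv (1,0) w) r)^2) q := by
    funext q; ring
  rw [hsq, pull (1,0) 4 _ cC, pull (1,0) 4 _ (contDiff_Dv _ cC)]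
  rw [pull (1,0) 2 _ (contDiff_Dv _ (contDiff_Dv _ cB)),
      pull (1,0) 2 _ (contDiff_Dv _ (contDiff_Dv _ (contDiff_Dv _ cB)))]
  linarith [hz]


theorem stmt1 (F : ℝ → ℝ → ℝ)
    (hF : ContDiff ℝ (⊤ : ℕ∞) (fun p : ℝ × ℝ => F p.1 p.2))
    (hpos : ∀ x t : ℝ, 0 < F x t)
    (hbilin : ∀ x t : ℝ,
      F x t * pt (pt F) x t - (pt F x t)^2 + F x t * px (px F) x t - (px F x t)^2
        - (1/3) * (F x t * px (px (px (px F))) x t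
            - 4 * px F x t * px (px (px F)) x t + 3 * (px (px F) x t)^2) = 0) :
    ∀ x t : ℝ,
      (fun u : ℝ → ℝ → ℝ =>
        pt (pt u) x t + px (px u) x t - px (px (fun y s => (u y s)^2)) x t
          - (1/3) * px (px (px (px u))) x t)
      (fun y s => 2 * px (px (fun a b => Real.log (F a b))) y s) = 0 := by
  intro x t
  have hg : ContDiff ℝ (⊤:ℕ∞) (fun p : ℝ×ℝ => F p.1 p.2) := hF.of_le (by simp)
  have hgd : Differentiable ℝ (fun p : ℝ×ℝ => F p.1 p.2) :=
    hg.differentiable (by simp)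
  have h0 : ∀ p : ℝ×ℝ, (fun p : ℝ×ℝ => F p.1 p.2) p ≠ 0 := fun p => (hpos p.1 p.2).ne'
  have hdd : ∀ {f : ℝ×ℝ→ℝ}, ContDiff ℝ (⊤:ℕ∞) f → Differentiable ℝ f :=
    fun h => h.differentiable (by simp)
  -- bridges for F
  have bF1 : px F = fun x t => Dv (1,0) (fun p : ℝ×ℝ => F p.1 p.2) (x,t) := px_bridge hgd
  have bFt1 : pt F = fun x t => Dv (0,1) (fun p : ℝ×ℝ => F p.1 p.2) (x,t) := pt_bridge hgd
  have bF2 : px (px F) = fun x t => Dv (1,0) (Dv (1,0) (fun p : ℝ×ℝ => F p.1 p.2)) (x,t) := by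
    rw [bF1]; exact px_bridge (hdd (contDiff_Dv _ hg))
  have bFt2 : pt (pt F) = fun x t => Dv (0,1) (Dv (0,1) (fun p : ℝ×ℝ => F p.1 p.2)) (x,t) := by
    rw [bFt1]; exact pt_bridge (hdd (contDiff_Dv _ hg))
  have bF3 : px (px (px F))
      = fun x t => Dv (1,0) (Dv (1,0) (Dv (1,0) (fun p : ℝ×ℝ => F p.1 p.2))) (x,t) := by
    rw [bF2]; exact px_bridge (hdd (contDiff_Dv _ (contDiff_Dv _ hg)))
  have bF4 : px (px (px (px F)))
      = fun x t => Dv (1,0) (Dv (1,0) (Dv (1,0) (Dv (1,0) (fun p : ℝ×ℝ => F p.1 p.2)))) (x,t) := by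
    rw [bF3]; exact px_bridge (hdd (contDiff_Dv _ (contDiff_Dv _ (contDiff_Dv _ hg))))
  have hb : ∀ p : ℝ×ℝ, (fun p : ℝ×ℝ => F p.1 p.2) p
        * Dv (0,1) (Dv (0,1) (fun p : ℝ×ℝ => F p.1 p.2)) p
        - (Dv (0,1) (fun p : ℝ×ℝ => F p.1 p.2) p)^2
        + (fun p : ℝ×ℝ => F p.1 p.2) p * Dv (1,0) (Dv (1,0) (fun p : ℝ×ℝ => F p.1 p.2)) p
        - (Dv (1,0) (fun p : ℝ×ℝ => F p.1 p.2) p)^2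
        - (1/3) * ((fun p : ℝ×ℝ => F p.1 p.2) p
            * Dv (1,0) (Dv (1,0) (Dv (1,0) (Dv (1,0) (fun p : ℝ×ℝ => F p.1 p.2)))) p
            - 4 * Dv (1,0) (fun p : ℝ×ℝ => F p.1 p.2) p
                * Dv (1,0) (Dv (1,0) (Dv (1,0) (fun p : ℝ×ℝ => F p.1 p.2))) p
            + 3 * (Dv (1,0) (Dv (1,0) (fun p : ℝ×ℝ => F p.1 p.2)) p)^2) = 0 := by
    intro p
    have h := hbilin p.1 p.2
    rw [bF4, bF3, bF2, bFt2, bF1, bFt1] at h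
    simpa using h
  -- the log function
  have hw : ContDiff ℝ (⊤:ℕ∞) (fun q : ℝ×ℝ => Real.log ((fun p : ℝ×ℝ => F p.1 p.2) q)) :=
    hg.log h0
  have hE := keyE (fun p : ℝ×ℝ => F p.1 p.2) hg h0 hb
  have hK := key2 (fun q : ℝ×ℝ => Real.log ((fun p : ℝ×ℝ => F p.1 p.2) q)) hw hE (x,t)
  -- bridges for the goal
  have bw1 : px (fun a b => Real.log (F a b))
      = fun x t => Dv (1,0) (fun q : ℝ×ℝ => Real.log (F q.1 q.2)) (x,t) :=
    px_bridge (hdd hw)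
  have bw2 : px (px (fun a b => Real.log (F a b)))
      = fun x t => Dv (1,0) (Dv (1,0) (fun q : ℝ×ℝ => Real.log (F q.1 q.2))) (x,t) := by
    rw [bw1]; exact px_bridge (hdd (contDiff_Dv _ hw))
  have cB : ContDiff ℝ (⊤:ℕ∞)
      (fun q : ℝ×ℝ => 2 * Dv (1,0) (Dv (1,0) (fun q : ℝ×ℝ => Real.log (F q.1 q.2))) q) :=
    contDiff_const.mul (contDiff_Dv _ (contDiff_Dv _ hw))
  have bu1 : pt (fun y s => 2 * Dv (1,0) (Dv (1,0) (fun q : ℝ×ℝ => Real.log (F q.1 q.2))) (y,s))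
      = fun x t => Dv (0,1)
          (fun q : ℝ×ℝ => 2 * Dv (1,0) (Dv (1,0) (fun q : ℝ×ℝ => Real.log (F q.1 q.2))) q)
          (x,t) := pt_bridge (hdd cB)
  have bu2 : pt (pt (fun y s => 2 * Dv (1,0) (Dv (1,0)
        (fun q : ℝ×ℝ => Real.log (F q.1 q.2))) (y,s)))
      = fun x t => Dv (0,1) (Dv (0,1)
          (fun q : ℝ×ℝ => 2 * Dv (1,0) (Dv (1,0) (fun q : ℝ×ℝ => Real.log (F q.1 q.2))) q))
          (x,t) := by
    rw [bu1]; exact pt_bridge (hdd (contDiff_Dv _ cB))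
  have bx1 : px (fun y s => 2 * Dv (1,0) (Dv (1,0) (fun q : ℝ×ℝ => Real.log (F q.1 q.2))) (y,s))
      = fun x t => Dv (1,0)
          (fun q : ℝ×ℝ => 2 * Dv (1,0) (Dv (1,0) (fun q : ℝ×ℝ => Real.log (F q.1 q.2))) q)
          (x,t) := px_bridge (hdd cB)
  have bx2 : px (px (fun y s => 2 * Dv (1,0) (Dv (1,0)
        (fun q : ℝ×ℝ => Real.log (F q.1 q.2))) (y,s)))
      = fun x t => Dv (1,0) (Dv (1,0)
          (fun q : ℝ×ℝ => 2 * Dv (1,0) (Dv (1,0) (fun q : ℝ×ℝ => Real.log (F q.1 q.2))) q))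
          (x,t) := by
    rw [bx1]; exact px_bridge (hdd (contDiff_Dv _ cB))
  have bx3 : px (px (px (fun y s => 2 * Dv (1,0) (Dv (1,0)
        (fun q : ℝ×ℝ => Real.log (F q.1 q.2))) (y,s))))
      = fun x t => Dv (1,0) (Dv (1,0) (Dv (1,0)
          (fun q : ℝ×ℝ => 2 * Dv (1,0) (Dv (1,0) (fun q : ℝ×ℝ => Real.log (F q.1 q.2))) q)))
          (x,t) := by
    rw [bx2]; exact px_bridge (hdd (contDiff_Dv _ (contDiff_Dv _ cB)))
  have bx4 : px (px (px (px (fun y s => 2 * Dv (1,0) (Dv (1,0)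
        (fun q : ℝ×ℝ => Real.log (F q.1 q.2))) (y,s)))))
      = fun x t => Dv (1,0) (Dv (1,0) (Dv (1,0) (Dv (1,0)
          (fun q : ℝ×ℝ => 2 * Dv (1,0) (Dv (1,0) (fun q : ℝ×ℝ => Real.log (F q.1 q.2))) q))))
          (x,t) := by
    rw [bx3]; exact px_bridge (hdd (contDiff_Dv _ (contDiff_Dv _ (contDiff_Dv _ cB))))
  have cB2 : ContDiff ℝ (⊤:ℕ∞)
      (fun q : ℝ×ℝ => (2 * Dv (1,0) (Dv (1,0) (fun q : ℝ×ℝ => Real.log (F q.1 q.2))) q)^2) :=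
    cB.pow 2
  have bs1 : px (fun y s => (2 * Dv (1,0) (Dv (1,0)
        (fun q : ℝ×ℝ => Real.log (F q.1 q.2))) (y,s))^2)
      = fun x t => Dv (1,0)
          (fun q : ℝ×ℝ => (2 * Dv (1,0) (Dv (1,0) (fun q : ℝ×ℝ => Real.log (F q.1 q.2))) q)^2)
          (x,t) := px_bridge (hdd cB2)
  have bs2 : px (px (fun y s => (2 * Dv (1,0) (Dv (1,0)
        (fun q : ℝ×ℝ => Real.log (F q.1 q.2))) (y,s))^2))
      = fun x t => Dv (1,0) (Dv (1,0)
          (fun q : ℝ×ℝ => (2 * Dv (1,0) (Dv (1,0) (fun q : ℝ×ℝ => Real.log (F q.1 q.2))) q)^2))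
          (x,t) := by
    rw [bs1]; exact px_bridge (hdd (contDiff_Dv _ cB2))
  show pt (pt (fun y s => 2 * px (px (fun a b => Real.log (F a b))) y s)) x t
      + px (px (fun y s => 2 * px (px (fun a b => Real.log (F a b))) y s)) x t
      - px (px (fun y s => ((fun y s => 2 * px (px (fun a b => Real.log (F a b))) y s) y s)^2)) x t
      - (1/3) * px (px (px (px (fun y s => 2 * px (px (fun a b => Real.log (F a b))) y s)))) x t = 0
  simp only [bw2]
  rw [bu2, bx4, bs2, bx2]
  exact hK
end

section
/- The polynomial f_2(x,t) = x^6 + (3t^2 + 25/3)x^4 + (3t^4 + 30t^2 - 125/9)x^2 + t^6 + (17/3)t^4 + (475/9)t^2 + 625/9 satisfies the bilinear Boussinesq equation F·F_tt - F_t^2 + F·F_xx - F_x^2 - (1/3)(F·F_xxxx - 4 F_x F_xxx + 3 F_xx^2) = 0. -/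
open Real

noncomputable def f₂ : ℝ → ℝ → ℝ := fun x t =>
  x^6 + (3*t^2 + 25/3)*x^4 + (3*t^4 + 30*t^2 - 125/9)*x^2
    + t^6 + (17/3)*t^4 + (475/9)*t^2 + 625/9

/-! Read `f₂` as a polynomial in `x` with coefficients depending on `t`, and vice versa; then all
its partial derivatives are `Polynomial.derivative`s and the equation is a polynomial identity. -/

open Polynomial

theorem px_eval (p : ℝ → ℝ[X]) :
    px (fun x t => (p t).eval x) = fun x t => (derivative (p t)).eval x := by
  funext x t
  exact Polynomial.deriv (p t)

theorem pt_eval (q : ℝ → ℝ[X]) :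
    pt (fun x t => (q x).eval t) = fun x t => (derivative (q x)).eval t := by
  funext x t
  exact Polynomial.deriv (q x)

namespace f₂

noncomputable def polyInX (t : ℝ) : ℝ[X] :=
  X^6 + C (3*t^2 + 25/3) * X^4 + C (3*t^4 + 30*t^2 - 125/9) * X^2
    + C (t^6 + (17/3)*t^4 + (475/9)*t^2 + 625/9)

noncomputable def polyInT (x : ℝ) : ℝ[X] :=
  X^6 + C (3*x^2 + 17/3) * X^4 + C (3*x^4 + 30*x^2 + 475/9) * X^2
    + C (x^6 + (25/3)*x^4 - (125/9)*x^2 + 625/9)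

theorem eq_eval_polyInX : f₂ = fun x t => (polyInX t).eval x := by
  funext x t
  simp only [f₂, polyInX, eval_add, eval_mul, eval_pow, eval_C, eval_X]
  ring

theorem eq_eval_polyInT : f₂ = fun x t => (polyInT x).eval t := by
  funext x t
  simp only [f₂, polyInT, eval_add, eval_mul, eval_pow, eval_C, eval_X]
  ring

end f₂

theorem stmt3 : ∀ x t : ℝ,
    f₂ x t * pt (pt f₂) x t - (pt f₂ x t)^2 + f₂ x t * px (px f₂) x t - (px f₂ x t)^2
      - (1/3) * (f₂ x t * px (px (px (px f₂))) x t
          - 4 * px f₂ x t * px (px (px f₂)) x t + 3 * (px (px f₂) x t)^2) = 0 := by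
  intro x t
  have hpx : px f₂ = fun x t => (derivative (f₂.polyInX t)).eval x := by
    rw [f₂.eq_eval_polyInX, px_eval]
  have hpt : pt f₂ = fun x t => (derivative (f₂.polyInT x)).eval t := by
    rw [f₂.eq_eval_polyInT, pt_eval]
  simp only [hpx, hpt, px_eval, pt_eval]
  simp only [f₂, f₂.polyInX, f₂.polyInT, derivative_add, derivative_C_mul_X_pow, derivative_X_pow,
    derivative_C, derivative_zero, eval_add, eval_mul, eval_pow, eval_C, eval_X, eval_zero]
  ring
end

section
/- For every real x, the integral over t ∈ ℝ of u_1(x,t) = 4(1 - x^2 + t^2)/(1 + x^2 + t^2)^2 equals 4π/(x^2 + 1)^{3/2}. -/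
/-!
Write `a = √(x² + 1)` and `c = 1 - x²`, so that the integrand is `4 (c + t²) / (a² + t²)²`.
This rational function has the elementary primitive
`(a² + c) / (2 a³) · arctan (t / a) + (c - a²) / (2 a²) · t / (a² + t²)`,
whose rational part vanishes at `±∞` while the arctangent tends to `±π/2`; hence
`∫ (c + t²) / (a² + t²)² dt = π (a² + c) / (2 a³)`, and `a² + c = 2`.
-/

open MeasureTheory Real Filter Topology

theorem tendsto_div_sq_add_sq_cocompact (a : ℝ) :
    Tendsto (fun t : ℝ => t / (a ^ 2 + t ^ 2)) (cocompact ℝ) (𝓝 0) := by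
  refine squeeze_zero_norm' ?_ tendsto_norm_cocompact_atTop.inv_tendsto_atTop
  filter_upwards with t
  rcases eq_or_ne t 0 with rfl | ht
  · simp
  calc ‖t / (a ^ 2 + t ^ 2)‖ = ‖t‖ / (a ^ 2 + ‖t‖ ^ 2) := by
        rw [norm_div, Real.norm_eq_abs, Real.norm_eq_abs, sq_abs,
          abs_of_pos (by positivity : 0 < a ^ 2 + t ^ 2)]
    _ ≤ ‖t‖ / ‖t‖ ^ 2 := by gcongr; linarith [sq_nonneg a]
    _ = ‖t‖⁻¹ := by field_simp

theorem integrable_inv_sq_add_sq {a : ℝ} (ha : a ≠ 0) :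
    Integrable fun t : ℝ => (a ^ 2 + t ^ 2)⁻¹ := by
  refine ((integrable_inv_one_add_sq.comp_div ha).const_mul (a ^ 2)⁻¹).congr
    (ae_of_all _ fun t => ?_)
  field_simp

theorem integrable_add_sq_div_sq_add_sq_sq {a : ℝ} (ha : a ≠ 0) (c : ℝ) :
    Integrable fun t : ℝ => (c + t ^ 2) / (a ^ 2 + t ^ 2) ^ 2 := by
  refine ((integrable_inv_sq_add_sq ha).const_mul (|c| / a ^ 2 + 1)).mono'
    (Continuous.div (by fun_prop) (by fun_prop) fun t => by positivity).aestronglyMeasurable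
    (ae_of_all _ fun t => ?_)
  have hpos : 0 < a ^ 2 + t ^ 2 := by positivity
  have hnum : |c + t ^ 2| ≤ (|c| / a ^ 2 + 1) * (a ^ 2 + t ^ 2) := by
    have : |c| ≤ |c| / a ^ 2 * (a ^ 2 + t ^ 2) := by
      rw [div_mul_eq_mul_div, le_div_iff₀ (by positivity)]
      nlinarith [abs_nonneg c, sq_nonneg t]
    nlinarith [abs_add_le c (t ^ 2), abs_of_nonneg (sq_nonneg t)]
  calc ‖(c + t ^ 2) / (a ^ 2 + t ^ 2) ^ 2‖ = |c + t ^ 2| / (a ^ 2 + t ^ 2) ^ 2 := by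
        rw [norm_div, norm_pow, Real.norm_eq_abs, Real.norm_eq_abs, abs_of_pos hpos]
    _ ≤ (|c| / a ^ 2 + 1) * (a ^ 2 + t ^ 2) / (a ^ 2 + t ^ 2) ^ 2 := by gcongr
    _ = (|c| / a ^ 2 + 1) * (a ^ 2 + t ^ 2)⁻¹ := by field_simp

theorem hasDerivAt_primitive_add_sq_div_sq_add_sq_sq {a : ℝ} (ha : a ≠ 0) (c t : ℝ) :
    HasDerivAt (fun t => (a ^ 2 + c) / (2 * a ^ 3) * arctan (t / a)
        + (c - a ^ 2) / (2 * a ^ 2) * (t / (a ^ 2 + t ^ 2)))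
      ((c + t ^ 2) / (a ^ 2 + t ^ 2) ^ 2) t := by
  have hpos : 0 < a ^ 2 + t ^ 2 := by positivity
  have harctan : HasDerivAt (fun t => arctan (t / a)) (1 / (1 + (t / a) ^ 2) * (1 / a)) t :=
    ((hasDerivAt_id t).div_const a).arctan
  have hrat : HasDerivAt (fun t => t / (a ^ 2 + t ^ 2))
      ((1 * (a ^ 2 + t ^ 2) - t * (2 * t)) / (a ^ 2 + t ^ 2) ^ 2) t := by
    refine (hasDerivAt_id t).div ?_ hpos.ne'
    simpa using (hasDerivAt_pow 2 t).const_add (a ^ 2)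
  refine ((harctan.const_mul ((a ^ 2 + c) / (2 * a ^ 3))).add
    (hrat.const_mul ((c - a ^ 2) / (2 * a ^ 2)))).congr_deriv ?_
  field_simp
  ring

theorem integral_add_sq_div_sq_add_sq_sq {a : ℝ} (ha : 0 < a) (c : ℝ) :
    ∫ t : ℝ, (c + t ^ 2) / (a ^ 2 + t ^ 2) ^ 2 = π * (a ^ 2 + c) / (2 * a ^ 3) := by
  have harctan_top : Tendsto (fun t => arctan (t / a)) atTop (𝓝 (π / 2)) :=
    tendsto_nhds_of_tendsto_nhdsWithin (tendsto_arctan_atTop.comp (tendsto_id.atTop_div_const ha))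
  have harctan_bot : Tendsto (fun t => arctan (t / a)) atBot (𝓝 (-(π / 2))) :=
    tendsto_nhds_of_tendsto_nhdsWithin (tendsto_arctan_atBot.comp (tendsto_id.atBot_div_const ha))
  have hrat := tendsto_div_sq_add_sq_cocompact a
  rw [integral_of_hasDerivAt_of_tendsto (hasDerivAt_primitive_add_sq_div_sq_add_sq_sq ha.ne' c)
    (integrable_add_sq_div_sq_add_sq_sq ha.ne' c)
    ((harctan_bot.const_mul _).add ((hrat.mono_left atBot_le_cocompact).const_mul _))
    ((harctan_top.const_mul _).add ((hrat.mono_left atTop_le_cocompact).const_mul _))]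
  field_simp
  ring

theorem stmt6 : ∀ x : ℝ,
    ∫ t : ℝ, 4 * (1 - x^2 + t^2) / (1 + x^2 + t^2)^2
      = 4 * π / (x^2 + 1) ^ ((3:ℝ)/2) := by
  intro x
  set a := √(x ^ 2 + 1)
  have ha : 0 < a := by positivity
  have ha2 : a ^ 2 = x ^ 2 + 1 := sq_sqrt (by positivity)
  have hpow : (x ^ 2 + 1) ^ ((3 : ℝ) / 2) = a ^ 3 := by
    rw [rpow_div_two_eq_sqrt _ (by positivity)]; norm_cast
  calc ∫ t : ℝ, 4 * (1 - x^2 + t^2) / (1 + x^2 + t^2)^2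
      = 4 * ∫ t : ℝ, (1 - x ^ 2 + t ^ 2) / (a ^ 2 + t ^ 2) ^ 2 := by
        rw [← integral_const_mul, ha2]; simp only [mul_div_assoc, add_comm (x ^ 2) 1]
    _ = 4 * π / (x^2 + 1) ^ ((3:ℝ)/2) := by
        rw [integral_add_sq_div_sq_add_sq_sq ha, hpow, ha2]; field_simp; ring
end

section
/- The double integral (1/(8π)) ∬_{ℝ²} u_1(x,t)^3 dx dt equals 2, where u_1(x,t) = 4(1 - x^2 + t^2)/(1 + x^2 + t^2)^2. -/
/-!
Integrating in `x` first, with `c = 1 + t²` the inner integrand is the cube of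
`4 (c - x²) / (c + x²)²`; the substitution `x = √c y` shows that its integral is `c^(-5/2)` times
its value at `c = 1`, so the outer integral is `12π · I(5/2)` where `I(s) = ∫ (1 + t²)^(-s) dt`.
At `c = 1`, writing `1 - y² = 2 - (1 + y²)` expands the integrand into `I(3), …, I(6)`.
All these values follow from `I(1) = π`, `I(3/2) = 2` and the reduction formula
`I(s + 1) = (2s - 1)/(2s) · I(s)`, which comes from integrating the derivative of
`t (1 + t²)^(-s)` over the line.
-/

open MeasureTheory Real Filter Topology

noncomputable def oneAddSqIntegral (s : ℝ) : ℝ := ∫ t : ℝ, (1 + t ^ 2) ^ (-s)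

section

variable {s : ℝ}

lemma integrable_one_add_sq_rpow_neg (hs : 1 / 2 < s) :
    Integrable fun t : ℝ => (1 + t ^ 2) ^ (-s) := by
  have h := integrable_rpow_neg_one_add_norm_sq (E := ℝ) (μ := volume) (r := 2 * s)
    (by simp; linarith)
  simpa [neg_div] using h

lemma hasDerivAt_mul_one_add_sq_rpow_neg (s t : ℝ) :
    HasDerivAt (fun t : ℝ => t * (1 + t ^ 2) ^ (-s))
      ((1 - 2 * s) * (1 + t ^ 2) ^ (-s) + 2 * s * (1 + t ^ 2) ^ (-(s + 1))) t := by
  have hw : (1 : ℝ) + t ^ 2 ≠ 0 := by positivity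
  refine ((hasDerivAt_id' t).mul
    (((hasDerivAt_pow 2 t).const_add 1).rpow_const (p := -s) (Or.inl hw))).congr_deriv ?_
  rw [show -(s + 1) = -s - 1 by ring, rpow_sub_one hw]
  field_simp
  ring

lemma tendsto_mul_one_add_sq_rpow_neg (hs : 1 / 2 < s) :
    Tendsto (fun t : ℝ => t * (1 + t ^ 2) ^ (-s)) (cocompact ℝ) (𝓝 0) := by
  have hw : Tendsto (fun t : ℝ => 1 + t ^ 2) (cocompact ℝ) atTop :=
    tendsto_atTop_add_const_left _ _
      ((tendsto_pow_atTop two_ne_zero).comp tendsto_norm_cocompact_atTop |>.congr (by simp))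
  refine squeeze_zero_norm (fun t => ?_)
    ((tendsto_rpow_neg_atTop (by linarith : 0 < s - 1 / 2)).comp hw)
  have hw0 : (0 : ℝ) < 1 + t ^ 2 := by positivity
  rw [norm_mul, norm_of_nonneg (by positivity : (0 : ℝ) ≤ (1 + t ^ 2) ^ (-s)), norm_eq_abs,
    Function.comp_apply, show -(s - 1 / 2) = 1 / 2 + -s by ring, rpow_add hw0, ← sqrt_eq_rpow]
  gcongr
  exact abs_le_sqrt (by linarith)

lemma oneAddSqIntegral_add_one (hs : 1 / 2 < s) :
    oneAddSqIntegral (s + 1) = (2 * s - 1) / (2 * s) * oneAddSqIntegral s := by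
  have hint := integrable_one_add_sq_rpow_neg hs
  have hint' := integrable_one_add_sq_rpow_neg (by linarith : 1 / 2 < s + 1)
  have hlim := tendsto_mul_one_add_sq_rpow_neg hs
  have h := integral_of_hasDerivAt_of_tendsto (hasDerivAt_mul_one_add_sq_rpow_neg s)
    ((hint.const_mul _).add (hint'.const_mul _)) (hlim.mono_left atBot_le_cocompact)
    (hlim.mono_left atTop_le_cocompact)
  rw [integral_add (hint.const_mul _) (hint'.const_mul _), integral_const_mul,
    integral_const_mul] at h
  unfold oneAddSqIntegral
  field_simp
  linarith

end

lemma oneAddSqIntegral_one : oneAddSqIntegral 1 = π := by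
  simp [oneAddSqIntegral, rpow_neg_one, integral_univ_inv_one_add_sq]

lemma oneAddSqIntegral_three_halves : oneAddSqIntegral (3 / 2) = 2 := by
  -- at `s = 1/2` the boundary term of the reduction formula no longer vanishes at infinity
  have hf : (fun t : ℝ => t * (1 + t ^ 2) ^ (-(1 / 2) : ℝ)) = fun t => sin (arctan t) := by
    funext t
    rw [sin_arctan, sqrt_eq_rpow, rpow_neg (by positivity), ← div_eq_mul_inv]
  have hderiv (t : ℝ) :
      HasDerivAt (fun t => sin (arctan t)) ((1 + t ^ 2) ^ (-(3 / 2) : ℝ)) t := by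
    have h := hasDerivAt_mul_one_add_sq_rpow_neg (1 / 2) t
    rw [hf] at h
    convert h using 1
    norm_num
  have hsin := continuous_sin.tendsto
  have h := integral_of_hasDerivAt_of_tendsto hderiv
    (integrable_one_add_sq_rpow_neg (by norm_num))
    ((hsin _).comp (tendsto_arctan_atBot.mono_right nhdsWithin_le_nhds))
    ((hsin _).comp (tendsto_arctan_atTop.mono_right nhdsWithin_le_nhds))
  rw [oneAddSqIntegral, h, sin_neg, sin_pi_div_two]
  norm_num

lemma oneAddSqIntegral_five_halves : oneAddSqIntegral (5 / 2) = 4 / 3 := by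
  rw [show (5 / 2 : ℝ) = 3 / 2 + 1 by norm_num, oneAddSqIntegral_add_one (by norm_num),
    oneAddSqIntegral_three_halves]
  norm_num

lemma integral_cube_one_sub_sq_div :
    ∫ x : ℝ, (4 * (1 - x ^ 2) / (1 + x ^ 2) ^ 2) ^ 3 = 12 * π := by
  have hpt (x : ℝ) : (4 * (1 - x ^ 2) / (1 + x ^ 2) ^ 2) ^ 3 =
      512 * (1 + x ^ 2) ^ (-(6 : ℝ)) - 768 * (1 + x ^ 2) ^ (-(5 : ℝ))
        + 384 * (1 + x ^ 2) ^ (-(4 : ℝ)) - 64 * (1 + x ^ 2) ^ (-(3 : ℝ)) := by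
    have hw : (0 : ℝ) < 1 + x ^ 2 := by positivity
    simp only [rpow_neg hw.le, rpow_ofNat]
    field_simp
    ring
  have hint (n c : ℝ) (hn : 1 ≤ n) : Integrable fun x : ℝ => c * (1 + x ^ 2) ^ (-n) :=
    (integrable_one_add_sq_rpow_neg (by linarith)).const_mul c
  have hi6 := hint 6 512 (by norm_num)
  have hi5 := hint 5 768 (by norm_num)
  have hi4 := hint 4 384 (by norm_num)
  have hi3 := hint 3 64 (by norm_num)
  simp_rw [hpt]
  rw [integral_sub (by exact (hi6.sub hi5).add hi4) hi3, integral_add (by exact hi6.sub hi5) hi4,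
    integral_sub hi6 hi5]
  simp only [integral_const_mul]
  change 512 * oneAddSqIntegral 6 - 768 * oneAddSqIntegral 5 + 384 * oneAddSqIntegral 4
    - 64 * oneAddSqIntegral 3 = 12 * π
  have h2 := oneAddSqIntegral_add_one (s := 1) (by norm_num)
  have h3 := oneAddSqIntegral_add_one (s := 2) (by norm_num)
  have h4 := oneAddSqIntegral_add_one (s := 3) (by norm_num)
  have h5 := oneAddSqIntegral_add_one (s := 4) (by norm_num)
  have h6 := oneAddSqIntegral_add_one (s := 5) (by norm_num)
  norm_num at h2 h3 h4 h5 h6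
  rw [h6, h5, h4, h3, h2, oneAddSqIntegral_one]
  ring

lemma integral_cube_sub_sq_div {c : ℝ} (hc : 0 < c) :
    ∫ x : ℝ, (4 * (c - x ^ 2) / (c + x ^ 2) ^ 2) ^ 3 = 12 * π * c ^ (-(5 / 2) : ℝ) := by
  obtain ⟨r, hr, rfl⟩ : ∃ r, 0 < r ∧ c = r ^ 2 := ⟨√c, sqrt_pos.2 hc, (sq_sqrt hc.le).symm⟩
  have hpt (x : ℝ) : (4 * (r ^ 2 - x ^ 2) / (r ^ 2 + x ^ 2) ^ 2) ^ 3 =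
      (r ^ 6)⁻¹ * (4 * (1 - (x / r) ^ 2) / (1 + (x / r) ^ 2) ^ 2) ^ 3 := by
    field_simp
  simp_rw [hpt]
  rw [integral_const_mul,
    Measure.integral_comp_div (fun y => (4 * (1 - y ^ 2) / (1 + y ^ 2) ^ 2) ^ 3),
    integral_cube_one_sub_sq_div, abs_of_pos hr, smul_eq_mul, ← rpow_natCast_mul hr.le]
  rw [show ((2 : ℕ) : ℝ) * -(5 / 2) = -(5 : ℕ) by norm_num, rpow_neg hr.le, rpow_natCast]
  field_simp

lemma integrable_cube_one_sub_sq_add_sq_div :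
    Integrable fun p : ℝ × ℝ =>
      (4 * (1 - p.1 ^ 2 + p.2 ^ 2) / (1 + p.1 ^ 2 + p.2 ^ 2) ^ 2) ^ 3 := by
  have hbound : Integrable fun p : ℝ × ℝ => 64 * ((1 + p.1 ^ 2)⁻¹ * (1 + p.2 ^ 2)⁻¹) := by
    rw [Measure.volume_eq_prod]
    exact (integrable_inv_one_add_sq.mul_prod integrable_inv_one_add_sq).const_mul 64
  have hcont : Continuous fun p : ℝ × ℝ =>
      4 * (1 - p.1 ^ 2 + p.2 ^ 2) / (1 + p.1 ^ 2 + p.2 ^ 2) ^ 2 :=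
    .div (by fun_prop) (by fun_prop) fun p => by positivity
  refine hbound.mono' (hcont.pow 3).aestronglyMeasurable (.of_forall fun ⟨x, t⟩ => ?_)
  have hnum : |1 - x ^ 2 + t ^ 2| ≤ 1 + x ^ 2 + t ^ 2 :=
    abs_le.2 ⟨by nlinarith [sq_nonneg x], by nlinarith [sq_nonneg x]⟩
  have hden : (1 + x ^ 2) * (1 + t ^ 2) ≤ (1 + x ^ 2 + t ^ 2) ^ 3 :=
    calc (1 + x ^ 2) * (1 + t ^ 2) ≤ (1 + x ^ 2 + t ^ 2) ^ 2 := by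
          nlinarith [sq_nonneg x, sq_nonneg t]
      _ ≤ (1 + x ^ 2 + t ^ 2) ^ 3 :=
          pow_le_pow_right₀ (by nlinarith [sq_nonneg x, sq_nonneg t]) (by norm_num)
  calc ‖(4 * (1 - x ^ 2 + t ^ 2) / (1 + x ^ 2 + t ^ 2) ^ 2) ^ 3‖
      = 64 * |1 - x ^ 2 + t ^ 2| ^ 3 / ((1 + x ^ 2 + t ^ 2) ^ 2) ^ 3 := by
        rw [norm_pow, norm_div, norm_mul, norm_eq_abs, norm_eq_abs, norm_eq_abs,
          abs_of_pos (by positivity : (0 : ℝ) < (1 + x ^ 2 + t ^ 2) ^ 2)]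
        norm_num [div_pow, mul_pow]
    _ ≤ 64 * (1 + x ^ 2 + t ^ 2) ^ 3 / ((1 + x ^ 2 + t ^ 2) ^ 2) ^ 3 := by gcongr
    _ = 64 / (1 + x ^ 2 + t ^ 2) ^ 3 := by field_simp
    _ ≤ 64 / ((1 + x ^ 2) * (1 + t ^ 2)) := by gcongr
    _ = 64 * ((1 + x ^ 2)⁻¹ * (1 + t ^ 2)⁻¹) := by rw [div_eq_mul_inv, mul_inv]

theorem stmt9 :
    (1 / (8 * π)) *
      ∫ p : ℝ × ℝ, (4 * (1 - p.1^2 + p.2^2) / (1 + p.1^2 + p.2^2)^2)^3 = 2 := by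
  have hinner (t : ℝ) : ∫ x : ℝ, (4 * (1 - x ^ 2 + t ^ 2) / (1 + x ^ 2 + t ^ 2) ^ 2) ^ 3
      = 12 * π * (1 + t ^ 2) ^ (-(5 / 2) : ℝ) := by
    rw [← integral_cube_sub_sq_div (by positivity)]
    congr 1 with x
    ring
  rw [Measure.volume_eq_prod, integral_prod_symm _
    (Measure.volume_eq_prod ℝ ℝ ▸ integrable_cube_one_sub_sq_add_sq_div)]
  simp only [hinner, integral_const_mul]
  change 1 / (8 * π) * (12 * π * oneAddSqIntegral (5 / 2)) = 2
  rw [oneAddSqIntegral_five_halves]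
  field_simp
  norm_num
end

section
/- Define v_1(x,t) = -2 ∂²/(∂x∂t) log(1 + x^2 + t^2) = 8xt/(1 + x^2 + t^2)^2. Then (1/(8π)) ∬_{ℝ²} v_1(x,t)^2 dx dt = 1/3. -/
/-! In polar coordinates the integrand separates: `r * v₁² = 64 r⁵ / (1 + r²)⁴ * sin² θ cos² θ`.
The radial factor has antiderivative `(r² / (1 + r²))³ / 6`, so it integrates to `1 / 6`, and the
angular factor integrates to `π / 4` over a period; hence `∬ v₁² = 64 * (1 / 6) * (π / 4) = 8π / 3`. -/

open MeasureTheory Real Set Filter Topology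

theorem integral_eq_mul_of_polarCoord_separable {f : ℝ × ℝ → ℝ} {g h : ℝ → ℝ}
    (hf : ∀ r ∈ Ioi (0 : ℝ), ∀ θ ∈ Ioo (-π) π, r * f (polarCoord.symm (r, θ)) = g r * h θ) :
    ∫ p, f p = (∫ r in Ioi 0, g r) * ∫ θ in Ioo (-π) π, h θ := by
  rw [← integral_comp_polarCoord_symm, ← setIntegral_prod_mul, Measure.volume_eq_prod]
  exact setIntegral_congr_fun polarCoord.open_target.measurableSet fun p hp => hf p.1 hp.1 p.2 hp.2

theorem integral_Ioi_pow_five_div_one_add_sq_pow_four :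
    ∫ r in Ioi (0 : ℝ), r ^ 5 / (1 + r ^ 2) ^ 4 = 1 / 6 := by
  have hderiv : ∀ r : ℝ, HasDerivAt (fun r : ℝ => (1 - (1 + r ^ 2)⁻¹) ^ 3 / 6)
      (r ^ 5 / (1 + r ^ 2) ^ 4) r := by
    intro r
    have h0 : (1 : ℝ) + r ^ 2 ≠ 0 := by positivity
    refine ((((((hasDerivAt_pow 2 r).const_add 1).inv h0).const_sub 1).pow 3).div_const
      6).congr_deriv ?_
    norm_num
    field_simp
    ring
  have hlim : Tendsto (fun r : ℝ => (1 - (1 + r ^ 2)⁻¹) ^ 3 / 6) atTop (𝓝 (1 / 6)) := by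
    have h : Tendsto (fun r : ℝ => (1 + r ^ 2)⁻¹) atTop (𝓝 0) :=
      tendsto_inv_atTop_zero.comp
        (tendsto_atTop_add_const_left _ 1 (tendsto_pow_atTop two_ne_zero))
    simpa using ((h.const_sub 1).pow 3).div_const 6
  rw [integral_Ioi_of_hasDerivAt_of_nonneg' (fun r _ => hderiv r)
    (fun r hr => div_nonneg (pow_nonneg (le_of_lt hr) 5) (by positivity)) hlim]
  norm_num

theorem integral_Ioo_neg_pi_pi_sin_sq_mul_cos_sq :
    ∫ θ in Ioo (-π) π, sin θ ^ 2 * cos θ ^ 2 = π / 4 := by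
  rw [← integral_Ioc_eq_integral_Ioo, ← intervalIntegral.integral_of_le (by linarith [pi_pos]),
    integral_sin_sq_mul_cos_sq, mul_neg, sin_neg, show sin (4 * π) = 0 by
      simpa using sin_nat_mul_pi 4]
  ring

theorem stmt14 :
    (1 / (8 * π)) *
      ∫ p : ℝ × ℝ, (8 * p.1 * p.2 / (1 + p.1^2 + p.2^2)^2)^2 = 1/3 := by
  rw [integral_eq_mul_of_polarCoord_separable (g := fun r => 64 * (r ^ 5 / (1 + r ^ 2) ^ 4))
    (h := fun θ => sin θ ^ 2 * cos θ ^ 2), integral_const_mul,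
    integral_Ioi_pow_five_div_one_add_sq_pow_four, integral_Ioo_neg_pi_pi_sin_sq_mul_cos_sq]
  · field_simp
    ring
  · intro r _ θ _
    have hr : 1 + (r * cos θ) ^ 2 + (r * sin θ) ^ 2 = 1 + r ^ 2 := by
      linear_combination r ^ 2 * sin_sq_add_cos_sq θ
    simp only [polarCoord_symm_apply, hr]
    field_simp
    ring
end

section
/- If u, v : ℝ × ℝ → ℝ are smooth and satisfy the Boussinesq system u_t + v_x = 0 and v_t + (u^2)_x - u_x + (1/3)u_xxx = 0, then ∂_t((2/3)u^3 + v^2 - u^2 - (1/3)u_x^2) + ∂_x(2u^2 v - 2uv + (2/3)v u_xx - (2/3)u_x v_x) = 0. -/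
open Real

section aux
variable {f : ℝ → ℝ → ℝ}

lemma hasDerivX (hf : ContDiff ℝ (⊤ : ℕ∞) (fun p : ℝ × ℝ => f p.1 p.2)) (x t : ℝ) :
    HasDerivAt (fun y => f y t) (fderiv ℝ (fun p : ℝ × ℝ => f p.1 p.2) (x, t) (1, 0)) x := by
  have h1 : HasDerivAt (fun y : ℝ => (y, t)) ((1 : ℝ), (0 : ℝ)) x :=
    (hasDerivAt_id x).prodMk (hasDerivAt_const x t)
  exact ((hf.differentiable (by simp) (x, t)).hasFDerivAt).comp_hasDerivAt x h1

lemma hasDerivT (hf : ContDiff ℝ (⊤ : ℕ∞) (fun p : ℝ × ℝ => f p.1 p.2)) (x t : ℝ) :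
    HasDerivAt (fun s => f x s) (fderiv ℝ (fun p : ℝ × ℝ => f p.1 p.2) (x, t) (0, 1)) t := by
  have h1 : HasDerivAt (fun s : ℝ => (x, s)) ((0 : ℝ), (1 : ℝ)) t :=
    (hasDerivAt_const t x).prodMk (hasDerivAt_id t)
  exact ((hf.differentiable (by simp) (x, t)).hasFDerivAt).comp_hasDerivAt t h1

lemma px_eq (hf : ContDiff ℝ (⊤ : ℕ∞) (fun p : ℝ × ℝ => f p.1 p.2)) (x t : ℝ) :
    px f x t = fderiv ℝ (fun p : ℝ × ℝ => f p.1 p.2) (x, t) (1, 0) :=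
  (hasDerivX hf x t).deriv

lemma pt_eq (hf : ContDiff ℝ (⊤ : ℕ∞) (fun p : ℝ × ℝ => f p.1 p.2)) (x t : ℝ) :
    pt f x t = fderiv ℝ (fun p : ℝ × ℝ => f p.1 p.2) (x, t) (0, 1) :=
  (hasDerivT hf x t).deriv

lemma contDiff_px (hf : ContDiff ℝ (⊤ : ℕ∞) (fun p : ℝ × ℝ => f p.1 p.2)) :
    ContDiff ℝ (⊤ : ℕ∞) (fun p : ℝ × ℝ => px f p.1 p.2) := by
  have h : ContDiff ℝ (⊤ : ℕ∞) (fun p : ℝ × ℝ =>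
      fderiv ℝ (fun q : ℝ × ℝ => f q.1 q.2) p ((1 : ℝ), (0 : ℝ))) :=
    (hf.fderiv_right (by simp)).clm_apply contDiff_const
  have e : (fun p : ℝ × ℝ => px f p.1 p.2) = fun p : ℝ × ℝ =>
      fderiv ℝ (fun q : ℝ × ℝ => f q.1 q.2) p ((1 : ℝ), (0 : ℝ)) :=
    funext fun p => px_eq hf p.1 p.2
  rw [e]; exact h

lemma contDiff_pt (hf : ContDiff ℝ (⊤ : ℕ∞) (fun p : ℝ × ℝ => f p.1 p.2)) :
    ContDiff ℝ (⊤ : ℕ∞) (fun p : ℝ × ℝ => pt f p.1 p.2) := by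
  have h : ContDiff ℝ (⊤ : ℕ∞) (fun p : ℝ × ℝ =>
      fderiv ℝ (fun q : ℝ × ℝ => f q.1 q.2) p ((0 : ℝ), (1 : ℝ))) :=
    (hf.fderiv_right (by simp)).clm_apply contDiff_const
  have e : (fun p : ℝ × ℝ => pt f p.1 p.2) = fun p : ℝ × ℝ =>
      fderiv ℝ (fun q : ℝ × ℝ => f q.1 q.2) p ((0 : ℝ), (1 : ℝ)) :=
    funext fun p => pt_eq hf p.1 p.2
  rw [e]; exact h

lemma mixed (hf : ContDiff ℝ (⊤ : ℕ∞) (fun p : ℝ × ℝ => f p.1 p.2)) (x t : ℝ) :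
    pt (px f) x t = px (pt f) x t := by
  set F : ℝ × ℝ → ℝ := fun p => f p.1 p.2 with hF
  have hsym : IsSymmSndFDerivAt ℝ F (x, t) :=
    hf.contDiffAt.isSymmSndFDerivAt (by rw [minSmoothness_of_isRCLikeNormedField]; exact WithTop.coe_le_coe.mpr (le_top : (2 : ℕ∞) ≤ ⊤))
  have hG : ContDiff ℝ (⊤ : ℕ∞) (fun p : ℝ × ℝ => fderiv ℝ F p) := hf.fderiv_right (by simp)
  have key : ∀ w : ℝ × ℝ, ∀ xt : ℝ × ℝ,
      fderiv ℝ (fun p => fderiv ℝ F p w) xt = (fderiv ℝ (fderiv ℝ F) xt).flip w := by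
    intro w xt
    have := fderiv_clm_apply (c := fun p : ℝ × ℝ => fderiv ℝ F p) (u := fun _ => w)
      ((hG.differentiable (by simp)) xt) (differentiableAt_const w)
    simpa using this
  have h1 : pt (px f) x t = fderiv ℝ (fun p : ℝ × ℝ => fderiv ℝ F p ((1:ℝ),(0:ℝ))) (x, t) ((0:ℝ),(1:ℝ)) := by
    have hc : ContDiff ℝ (⊤ : ℕ∞) (fun p : ℝ × ℝ => px f p.1 p.2) := contDiff_px hf
    have := pt_eq hc x t
    have e : (fun p : ℝ × ℝ => px f p.1 p.2) = fun p : ℝ × ℝ => fderiv ℝ F p ((1:ℝ),(0:ℝ)) :=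
      funext fun (p : ℝ × ℝ) => px_eq hf p.1 p.2
    rw [this, e]
  have h2 : px (pt f) x t = fderiv ℝ (fun p : ℝ × ℝ => fderiv ℝ F p ((0:ℝ),(1:ℝ))) (x, t) ((1:ℝ),(0:ℝ)) := by
    have hc : ContDiff ℝ (⊤ : ℕ∞) (fun p : ℝ × ℝ => pt f p.1 p.2) := contDiff_pt hf
    have := px_eq hc x t
    have e : (fun p : ℝ × ℝ => pt f p.1 p.2) = fun p : ℝ × ℝ => fderiv ℝ F p ((0:ℝ),(1:ℝ)) :=
      funext fun (p : ℝ × ℝ) => pt_eq hf p.1 p.2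
    rw [this, e]
  rw [h1, h2, key, key]
  simpa using hsym ((0:ℝ),(1:ℝ)) ((1:ℝ),(0:ℝ))

end aux

theorem stmt16 (u v : ℝ → ℝ → ℝ)
    (hu : ContDiff ℝ (⊤ : ℕ∞) (fun p : ℝ × ℝ => u p.1 p.2))
    (hv : ContDiff ℝ (⊤ : ℕ∞) (fun p : ℝ × ℝ => v p.1 p.2))
    (heq1 : ∀ x t, pt u x t + px v x t = 0)
    (heq2 : ∀ x t, pt v x t + px (fun y s => (u y s)^2) x t - px u x t
        + (1/3) * px (px (px u)) x t = 0) :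
    ∀ x t : ℝ,
      pt (fun y s => (2/3) * (u y s)^3 + (v y s)^2 - (u y s)^2 - (1/3) * (px u y s)^2) x t
        + px (fun y s => 2 * (u y s)^2 * v y s - 2 * u y s * v y s
            + (2/3) * v y s * px (px u) y s - (2/3) * px u y s * px v y s) x t = 0 := by
  intro x t
  have hux := contDiff_px hu
  have huxx := contDiff_px hux
  have hvx := contDiff_px hv
  -- time derivatives (slices in t)
  have hU : HasDerivAt (fun s => u x s) (pt u x t) t :=
    (hasDerivT hu x t).differentiableAt.hasDerivAt
  have hV : HasDerivAt (fun s => v x s) (pt v x t) t :=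
    (hasDerivT hv x t).differentiableAt.hasDerivAt
  have hW : HasDerivAt (fun s => px u x s) (pt (px u) x t) t :=
    (hasDerivT hux x t).differentiableAt.hasDerivAt
  -- space derivatives (slices in x)
  have hUx : HasDerivAt (fun y => u y t) (px u x t) x :=
    (hasDerivX hu x t).differentiableAt.hasDerivAt
  have hVx : HasDerivAt (fun y => v y t) (px v x t) x :=
    (hasDerivX hv x t).differentiableAt.hasDerivAt
  have hUxx : HasDerivAt (fun y => px u y t) (px (px u) x t) x :=
    (hasDerivX hux x t).differentiableAt.hasDerivAt
  have hVxx : HasDerivAt (fun y => px v y t) (px (px v) x t) x :=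
    (hasDerivX hvx x t).differentiableAt.hasDerivAt
  have hUxxx : HasDerivAt (fun y => px (px u) y t) (px (px (px u)) x t) x :=
    (hasDerivX huxx x t).differentiableAt.hasDerivAt
  -- energy density time derivative
  have E1 : pt (fun y s => (2/3) * (u y s)^3 + (v y s)^2 - (u y s)^2 - (1/3) * (px u y s)^2) x t
      = (2/3) * ((3:ℕ) * (u x t)^2 * pt u x t) + (2:ℕ) * (v x t)^1 * pt v x t
        - (2:ℕ) * (u x t)^1 * pt u x t - (1/3) * ((2:ℕ) * (px u x t)^1 * pt (px u) x t) :=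
    (((HasDerivAt.const_mul ((2:ℝ)/3) (hU.pow 3)).add (hV.pow 2)).sub (hU.pow 2)).sub
      (HasDerivAt.const_mul ((1:ℝ)/3) (hW.pow 2)) |>.deriv
  -- flux space derivative
  have E2 : px (fun y s => 2 * (u y s)^2 * v y s - 2 * u y s * v y s
        + (2/3) * v y s * px (px u) y s - (2/3) * px u y s * px v y s) x t
      = ((2 * ((2:ℕ) * (u x t)^1 * px u x t)) * v x t + 2 * (u x t)^2 * px v x t)
        - ((2 * px u x t) * v x t + 2 * u x t * px v x t)
        + (((2/3) * px v x t) * px (px u) x t + (2/3) * v x t * px (px (px u)) x t)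
        - (((2/3) * px (px u) x t) * px v x t + (2/3) * px u x t * px (px v) x t) :=
    ((((hUx.pow 2).const_mul (2:ℝ)).mul hVx).sub ((hUx.const_mul (2:ℝ)).mul hVx)).add
      ((hVx.const_mul ((2:ℝ)/3)).mul hUxxx) |>.sub ((hUxx.const_mul ((2:ℝ)/3)).mul hVxx)
      |>.deriv
  -- square rule
  have hsq : px (fun y s => (u y s)^2) x t = (2:ℕ) * (u x t)^1 * px u x t := (hUx.pow 2).deriv
  -- substitutions from the PDE
  have h1 : pt u x t = -px v x t := by linarith [heq1 x t]
  have h2 : pt v x t = px u x t - 2 * u x t * px u x t - (1/3) * px (px (px u)) x t := by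
    have h := heq2 x t
    rw [hsq] at h
    push_cast at h
    linarith
  have h3 : pt (px u) x t = -px (px v) x t := by
    rw [mixed hu x t]
    have e : (fun y => pt u y t) = fun y => -(px v y t) := by
      funext y
      linarith [heq1 y t]
    show deriv (fun y => pt u y t) x = _
    rw [e]
    exact hVxx.neg.deriv
  rw [E1, E2, h1, h2, h3]
  push_cast
  ring
end
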